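/- For every integer m ≥ 0, every real η, and every ε > 0, one has (1/2πi)·∫_{ε+iℝ} e^{v² + 2ηv}·v^{m} dv = (e^{−η²}/√π)·H_m(−η)/2^{m+1}. -/

import Mathlib

/-- Physicists' Hermite polynomial `H_n` at a real argument. -/
noncomputable def HR (n : ℕ) (x : ℝ) : ℝ :=
  (n.factorial : ℝ) * ∑ m ∈ Finset.range (n / 2 + 1),
    (-1 : ℝ) ^ m * (2 * x) ^ (n - 2 * m) / ((m.factorial : ℝ) * ((n - 2 * m).factorial : ℝ))

/-- `(1/2πi)·∫_{ε+iℝ} f(v) dv`, defined as `(1/2π)·∫_{−∞}^∞ f(ε+it) dt` (line oriented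
upward). -/
noncomputable def lineIntegral (ε : ℝ) (f : ℂ → ℂ) : ℂ :=
  (1 / (2 * (Real.pi : ℂ))) * ∫ t : ℝ, f ((ε : ℂ) + t * Complex.I)

/-!
Substituting `u = v + η` turns the integrand into `e^{-η²} e^{u²} (u - η)^m`, so after a binomial
expansion everything reduces to the moments `M_j = (1/2πi) ∫ e^{u²} u^j du` over a vertical line.
The line integral of the derivative of `e^{u²} u^k` vanishes, which gives
`2 M_{k+1} + k M_{k-1} = 0`, and `M_0 = 1/(2√π)` is a Gaussian integral. Hence the odd moments
vanish and `M_{2k} = (-1)^k (2k)! / (k! 4^k) · M_0`, and the binomial expansion becomes the explicit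
sum defining `H_m(-η) / 2^m`.
-/

open MeasureTheory Complex Finset
open scoped Nat Real

def LineIntegrable (c : ℝ) (f : ℂ → ℂ) : Prop :=
  Integrable fun t : ℝ => f ((c : ℂ) + t * I)

section LineIntegral

variable {c : ℝ} {f g : ℂ → ℂ}

lemma LineIntegrable.add (hf : LineIntegrable c f) (hg : LineIntegrable c g) :
    LineIntegrable c fun z => f z + g z :=
  Integrable.add hf hg

lemma LineIntegrable.const_mul (hf : LineIntegrable c f) (a : ℂ) :
    LineIntegrable c fun z => a * f z :=
  Integrable.const_mul hf a

lemma lineIntegral_add (hf : LineIntegrable c f) (hg : LineIntegrable c g) :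
    lineIntegral c (fun z => f z + g z) = lineIntegral c f + lineIntegral c g := by
  rw [lineIntegral, integral_add hf hg, mul_add]; rfl

lemma lineIntegral_const_mul (a : ℂ) :
    lineIntegral c (fun z => a * f z) = a * lineIntegral c f := by
  rw [lineIntegral, integral_const_mul, mul_left_comm]; rfl

lemma lineIntegral_finset_sum {ι : Type*} (s : Finset ι) {F : ι → ℂ → ℂ}
    (hF : ∀ i ∈ s, LineIntegrable c (F i)) :
    lineIntegral c (fun z => ∑ i ∈ s, F i z) = ∑ i ∈ s, lineIntegral c (F i) := by
  rw [lineIntegral, integral_finsetSum s hF, mul_sum]; rfl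

lemma lineIntegral_add_ofReal (a : ℝ) :
    lineIntegral (c + a) f = lineIntegral c (fun z => f (z + a)) := by
  simp only [lineIntegral, ofReal_add, add_right_comm]

lemma lineIntegral_deriv_eq_zero {f' : ℂ → ℂ} (hderiv : ∀ z, HasDerivAt f (f' z) z)
    (hf : LineIntegrable c f) (hf' : LineIntegrable c f') : lineIntegral c f' = 0 := by
  have hline (t : ℝ) : HasDerivAt (fun t : ℝ => f (c + t * I)) (I * f' (c + t * I)) t := by
    have := ((hasDerivAt_id (t : ℂ)).mul_const I).const_add (c : ℂ)
    rw [mul_comm]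
    simpa using ((hderiv _).comp (t : ℂ) this).comp_ofReal
  have := integral_eq_zero_of_hasDerivAt_of_integrable hline (hf'.const_mul I) hf
  rw [integral_const_mul, mul_eq_zero] at this
  simp [lineIntegral, this.resolve_left I_ne_zero]

end LineIntegral

noncomputable def gaussMoment (c : ℝ) (j : ℕ) : ℂ :=
  lineIntegral c fun z => cexp (z ^ 2) * z ^ j

lemma pow_le_factorial_mul_exp_one_add_sq_div_two {x : ℝ} (hx : 0 ≤ x) (j : ℕ) :
    x ^ j ≤ j ! * rexp ((1 + x ^ 2) / 2) := by
  have hexp : x ^ j / j ! ≤ rexp x := Real.pow_div_factorial_le_exp (x := x) hx j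
  rw [div_le_iff₀ (by positivity), mul_comm] at hexp
  exact hexp.trans (by gcongr; nlinarith [sq_nonneg (x - 1)])

lemma lineIntegrable_cexp_sq_mul_pow (c : ℝ) (j : ℕ) :
    LineIntegrable c fun z => cexp (z ^ 2) * z ^ j := by
  have hbound (t : ℝ) : ‖cexp (((c : ℂ) + t * I) ^ 2) * ((c : ℂ) + t * I) ^ j‖ ≤
      j ! * rexp ((1 + 3 * c ^ 2) / 2) * rexp (-(1 / 2) * t ^ 2) := by
    have hre : (((c : ℂ) + t * I) ^ 2).re = c ^ 2 - t ^ 2 := by simp [sq]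
    have hnorm : ‖(c : ℂ) + t * I‖ ^ 2 = c ^ 2 + t ^ 2 := by
      rw [Complex.sq_norm, normSq_add_mul_I]
    rw [norm_mul, norm_pow, norm_exp, hre]
    calc rexp (c ^ 2 - t ^ 2) * ‖(c : ℂ) + t * I‖ ^ j
        ≤ rexp (c ^ 2 - t ^ 2) * (j ! * rexp ((1 + (c ^ 2 + t ^ 2)) / 2)) := by
          rw [← hnorm]
          gcongr
          exact pow_le_factorial_mul_exp_one_add_sq_div_two (norm_nonneg _) j
      _ = j ! * rexp ((1 + 3 * c ^ 2) / 2) * rexp (-(1 / 2) * t ^ 2) := by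
          rw [mul_left_comm, mul_assoc, ← Real.exp_add, ← Real.exp_add]
          ring_nf
  refine Integrable.mono' ((integrable_exp_neg_mul_sq (by norm_num)).const_mul _) ?_
    (.of_forall hbound)
  exact Continuous.aestronglyMeasurable (by fun_prop)

lemma hasDerivAt_cexp_sq_mul_pow (k : ℕ) (z : ℂ) :
    HasDerivAt (fun z => cexp (z ^ 2) * z ^ k)
      (2 * (cexp (z ^ 2) * z ^ (k + 1)) + k * (cexp (z ^ 2) * z ^ (k - 1))) z := by
  refine (((hasDerivAt_pow 2 z).cexp).mul (hasDerivAt_pow k z)).congr_deriv ?_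
  rcases k with _ | k
  · simp only [Nat.cast_ofNat, pow_zero, CharP.cast_eq_zero, zero_mul, add_zero]
    ring
  · simp only [Nat.add_sub_cancel]
    push_cast
    ring

lemma gaussMoment_recurrence (c : ℝ) (k : ℕ) :
    2 * gaussMoment c (k + 1) + k * gaussMoment c (k - 1) = 0 := by
  have hint (j : ℕ) := lineIntegrable_cexp_sq_mul_pow c j
  have h := lineIntegral_deriv_eq_zero (hasDerivAt_cexp_sq_mul_pow k) (hint k)
    (((hint (k + 1)).const_mul 2).add ((hint (k - 1)).const_mul k))
  rwa [lineIntegral_add ((hint (k + 1)).const_mul 2) ((hint (k - 1)).const_mul k),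
    lineIntegral_const_mul, lineIntegral_const_mul] at h

lemma gaussMoment_zero (c : ℝ) : gaussMoment c 0 = ((1 / (2 * √π) : ℝ) : ℂ) := by
  have hquad (t : ℝ) : cexp (((c : ℂ) + t * I) ^ 2) * ((c : ℂ) + t * I) ^ 0 =
      cexp (-1 * t ^ 2 + 2 * c * I * t + c ^ 2) := by
    rw [pow_zero, mul_one]
    congr 1
    linear_combination (t : ℂ) ^ 2 * I_sq
  have hsqrt : (π : ℂ) ^ (1 / 2 : ℂ) = ((√π : ℝ) : ℂ) := by
    rw [Real.sqrt_eq_rpow, ofReal_cpow Real.pi_pos.le]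
    norm_num
  have hπ_sq : (π : ℂ) = ((√π : ℝ) : ℂ) ^ 2 := by
    rw [← ofReal_pow, Real.sq_sqrt Real.pi_pos.le]
  simp only [gaussMoment, lineIntegral, hquad]
  rw [integral_cexp_quadratic (by norm_num), neg_neg, div_one, hsqrt,
    show (c : ℂ) ^ 2 - (2 * c * I) ^ 2 / (4 * -1) = 0 by linear_combination (c : ℂ) ^ 2 * I_sq,
    Complex.exp_zero, mul_one, hπ_sq]
  push_cast
  field_simp

lemma gaussMoment_two_mul_add_one (c : ℝ) (k : ℕ) : gaussMoment c (2 * k + 1) = 0 := by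
  induction k with
  | zero => simpa using gaussMoment_recurrence c 0
  | succ k ih =>
    have h := gaussMoment_recurrence c (2 * k + 2)
    rw [show 2 * k + 2 - 1 = 2 * k + 1 by omega, ih, mul_zero, add_zero] at h
    simpa [mul_add] using h

lemma gaussMoment_two_mul (c : ℝ) (k : ℕ) :
    gaussMoment c (2 * k) = (((-1) ^ k * (2 * k)! / (k ! * 4 ^ k) : ℝ) : ℂ) * gaussMoment c 0 := by
  induction k with
  | zero => simp
  | succ k ih =>
    have h := gaussMoment_recurrence c (2 * k + 1)
    rw [Nat.add_sub_cancel, show 2 * k + 1 + 1 = 2 * (k + 1) by ring] at h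
    rw [show gaussMoment c (2 * (k + 1)) = -((2 * k + 1) / 2) * gaussMoment c (2 * k) by
      push_cast at h; linear_combination h / 2, ih, ← mul_assoc]
    congr 1
    rw [show 2 * (k + 1) = 2 * k + 1 + 1 by ring, Nat.factorial_succ, Nat.factorial_succ,
      Nat.factorial_succ]
    push_cast
    field_simp
    ring

lemma Finset.sum_range_succ_eq_sum_range_two_mul {M : Type*} [AddCommMonoid M] {f : ℕ → M}
    (hf : ∀ k, f (2 * k + 1) = 0) (m : ℕ) :
    ∑ j ∈ range (m + 1), f j = ∑ k ∈ range (m / 2 + 1), f (2 * k) := by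
  induction m using Nat.twoStepInduction with
  | zero => simp
  | one => simp [sum_range_succ, hf 0]
  | more m ih _ =>
    rw [sum_range_succ _ (m + 2), sum_range_succ _ (m + 1), ih,
      show (m + 2) / 2 = m / 2 + 1 by omega, sum_range_succ _ (m / 2 + 1), add_assoc]
    congr 1
    rcases Nat.even_or_odd' m with ⟨p, rfl | rfl⟩
    · rw [hf p, zero_add, show 2 * p / 2 = p by omega]; rfl
    · rw [show 2 * p + 1 + 2 = 2 * (p + 1) + 1 by ring, hf, add_zero,
        show (2 * p + 1) / 2 = p by omega]; rfl

lemma HR_div_two_pow (m : ℕ) (x : ℝ) :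
    HR m x / 2 ^ m = ∑ k ∈ range (m / 2 + 1),
      x ^ (m - 2 * k) * m.choose (2 * k) * ((-1) ^ k * (2 * k)! / (k ! * 4 ^ k)) := by
  rw [HR, mul_div_right_comm, mul_sum]
  refine sum_congr rfl fun k hk => ?_
  have hk : 2 * k ≤ m := by rw [mem_range] at hk; omega
  rw [← Nat.choose_mul_factorial_mul_factorial hk, mul_pow,
    show (4 : ℝ) ^ k = 2 ^ (2 * k) by rw [pow_mul]; norm_num, ← pow_sub_mul_pow 2 hk]
  push_cast
  field_simp

lemma lineIntegral_cexp_sq_add_mul_mul_pow (c η : ℝ) (m : ℕ) :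
    lineIntegral c (fun v => cexp (v ^ 2 + 2 * η * v) * v ^ m) =
      cexp (-η ^ 2) * ∑ j ∈ range (m + 1), (-η) ^ (m - j) * m.choose j * gaussMoment (c + η) j := by
  have hpoint (v : ℂ) : cexp (v ^ 2 + 2 * η * v) * v ^ m = cexp (-η ^ 2) *
      ∑ j ∈ range (m + 1), (-η) ^ (m - j) * m.choose j * (cexp ((v + η) ^ 2) * (v + η) ^ j) := by
    have hexp : cexp (v ^ 2 + 2 * η * v) = cexp (-η ^ 2) * cexp ((v + η) ^ 2) := by
      rw [← Complex.exp_add]; ring_nf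
    rw [hexp, show v ^ m = ((v + η) + -η) ^ m by ring, add_pow (v + η) (-η), mul_sum, mul_sum]
    exact sum_congr rfl fun j _ => by ring
  have hint (j : ℕ) :=
    (lineIntegrable_cexp_sq_mul_pow (c + η) j).const_mul ((-η) ^ (m - j) * m.choose j)
  calc lineIntegral c (fun v => cexp (v ^ 2 + 2 * η * v) * v ^ m)
      = lineIntegral (c + η) fun u => cexp (-η ^ 2) *
          ∑ j ∈ range (m + 1), (-η) ^ (m - j) * m.choose j * (cexp (u ^ 2) * u ^ j) := by
        simp_rw [lineIntegral_add_ofReal, hpoint]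
    _ = _ := by
        rw [lineIntegral_const_mul, lineIntegral_finset_sum _ fun j _ => hint j]
        simp_rw [lineIntegral_const_mul]
        rfl

theorem line_integral_hermite_general (m : ℕ) (η ε : ℝ) :
    lineIntegral ε (fun v => Complex.exp (v ^ 2 + 2 * (η : ℂ) * v) * v ^ m)
      = ((Real.exp (-η ^ 2) / Real.sqrt Real.pi * HR m (-η) / 2 ^ (m + 1) : ℝ) : ℂ) := by
  have hodd (k : ℕ) : (-η : ℂ) ^ (m - (2 * k + 1)) * m.choose (2 * k + 1) *
      gaussMoment (ε + η) (2 * k + 1) = 0 := by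
    rw [gaussMoment_two_mul_add_one, mul_zero]
  calc lineIntegral ε (fun v => cexp (v ^ 2 + 2 * η * v) * v ^ m)
      = cexp (-η ^ 2) * ∑ k ∈ range (m / 2 + 1),
          (-η) ^ (m - 2 * k) * m.choose (2 * k) * gaussMoment (ε + η) (2 * k) := by
        rw [lineIntegral_cexp_sq_add_mul_mul_pow, sum_range_succ_eq_sum_range_two_mul hodd]
    _ = cexp (-η ^ 2) * ((HR m (-η) / 2 ^ m : ℝ) * gaussMoment (ε + η) 0) := by
        rw [HR_div_two_pow, ofReal_sum, sum_mul]
        congr 1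
        refine sum_congr rfl fun k _ => ?_
        rw [gaussMoment_two_mul]
        push_cast
        ring
    _ = _ := by
        rw [gaussMoment_zero]
        push_cast
        field_simp
        ring

/-- `(1/2πi)·∫_{ε+iℝ} e^{v² + 2ηv}·v^m dv = (e^{−η²}/√π)·H_m(−η)/2^{m+1}`. -/
theorem line_integral_hermite (m : ℕ) (η ε : ℝ) (hε : 0 < ε) :
    lineIntegral ε (fun v => Complex.exp (v ^ 2 + 2 * (η : ℂ) * v) * v ^ m)
      = ((Real.exp (-η ^ 2) / Real.sqrt Real.pi * HR m (-η) / 2 ^ (m + 1) : ℝ) : ℂ) :=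
  line_integral_hermite_general m η ε
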